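/- arXiv:1612.01434 — 6 statements merged into one kernel-verified Lean document; each statement's English description precedes it below -/
import Mathlib

section
/- Let α be a rational number with 0 < α ≤ 1 and let λ ≥ 1 be an integer. For every approval profile, every ranking r producible by Phragmén's rule on that profile, and every (α,λ)-significant group N' ⊆ N, it holds that avg(N', r_{≤k}) ≥ λ, where k = min(⌈5λ/α² + 1/α⌉, m). -/
open Finset

/-- The set of the top `k` alternatives of the ranking `r`
(where `r j` is the alternative at position `j`). -/
def topk {m : ℕ} (r : Fin m ≃ Fin m) (k : ℕ) : Finset (Fin m) :=
  Finset.univ.filter fun a => (r.symm a : ℕ) < k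

/-- Average representation of the group `N'` with respect to the set `S`. -/
def avgRep {n m : ℕ} (App : Fin n → Finset (Fin m)) (N' : Finset (Fin n))
    (S : Finset (Fin m)) : ℚ :=
  (∑ i ∈ N', ((App i ∩ S).card : ℚ)) / (N'.card : ℚ)

/-- `N'` is `(α, λ)`-significant: it has `⌈αn⌉` members and cohesiveness at least `λ`. -/
def Significant {n m : ℕ} (App : Fin n → Finset (Fin m)) (α : ℚ) (lam : ℕ)
    (N' : Finset (Fin n)) : Prop :=
  (N'.card : ℤ) = ⌈α * (n : ℚ)⌉ ∧ lam ≤ (N'.inf App).card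

/-- `load` is a valid execution trace of Phragmén's rule producing the ranking `r`:
`load t i` is the load of voter `i` after `t` steps. At step `t+1` (which ranks the
alternative `r t` at position `t`), one unit of load is distributed among the approvers
of `r t`, and the chosen alternative together with its load distribution minimizes the
resulting maximum voter load among all still-unranked alternatives and all valid
distributions for them. -/
def IsPhragmenExec {n m : ℕ} (App : Fin n → Finset (Fin m)) (r : Fin m ≃ Fin m)
    (load : ℕ → Fin n → ℚ) : Prop :=
  (∀ i, load 0 i = 0) ∧
  (∀ t : Fin m, ∀ i, load (t : ℕ) i ≤ load ((t : ℕ) + 1) i) ∧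
  (∀ t : Fin m, ∀ i, load ((t : ℕ) + 1) i ≠ load (t : ℕ) i → r t ∈ App i) ∧
  (∀ t : Fin m, ∑ i, (load ((t : ℕ) + 1) i - load (t : ℕ) i) = 1) ∧
  (∀ t : Fin m, ∀ b : Fin m, (t : ℕ) ≤ (r.symm b : ℕ) →
    ∀ δ : Fin n → ℚ, (∀ i, 0 ≤ δ i) → (∀ i, δ i ≠ 0 → b ∈ App i) → (∑ i, δ i) = 1 →
      ∀ i, ∃ j, load ((t : ℕ) + 1) i ≤ load (t : ℕ) j + δ j)

set_option maxHeartbeats 1000000 in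
theorem phragmen_group_representation
    (α : ℚ) (hα0 : 0 < α) (hα1 : α ≤ 1) (lam : ℕ) (hlam : 1 ≤ lam)
    {n m : ℕ} (App : Fin n → Finset (Fin m)) (hApp : ∀ i, (App i).Nonempty)
    (r : Fin m ≃ Fin m) (load : ℕ → Fin n → ℚ)
    (hexec : IsPhragmenExec App r load)
    (N' : Finset (Fin n)) (hN' : Significant App α lam N') :
    (lam : ℚ) ≤
      avgRep App N' (topk r (min (⌈5 * (lam : ℚ) / α ^ 2 + 1 / α⌉.toNat) m)) := by
  classical
  obtain ⟨hload0, hmono, happr, hsum1, hopt⟩ := hexec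
  obtain ⟨hNcard, hNinf⟩ := hN'
  set K := (⌈5 * (lam : ℚ) / α ^ 2 + 1 / α⌉).toNat with hK
  set k := min K m with hkdef
  have hkm : k ≤ m := min_le_right _ _
  have hm : 0 < m := by
    rcases Nat.eq_zero_or_pos m with h | h
    · exfalso
      have h1 : (N'.inf App).card ≤ m := by
        simpa [h] using Finset.card_le_univ (N'.inf App)
      omega
    · exact h
  have hn : 0 < n := by
    rcases Nat.eq_zero_or_pos n with h | h
    · exfalso
      have h1 := hsum1 ⟨0, hm⟩
      subst h
      simp at h1
    · exact h
  have hcard0 : 0 < N'.card := by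
    have h2 : (0:ℤ) < ⌈α * (n:ℚ)⌉ := by
      apply Int.ceil_pos.mpr
      have hn' : (0:ℚ) < (n:ℚ) := by exact_mod_cast hn
      positivity
    rw [← hNcard] at h2
    exact_mod_cast h2
  have hnq : (0:ℚ) < (N'.card : ℚ) := by exact_mod_cast hcard0
  have hαn : α * n ≤ (N'.card : ℚ) := by
    have h1 := Int.le_ceil (α * (n:ℚ))
    rw [← hNcard] at h1
    exact_mod_cast h1
  have hlamQ : (1:ℚ) ≤ (lam:ℚ) := by exact_mod_cast hlam
  by_cases hsub : (N'.inf App) ⊆ topk r k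
  · -- Case A : all common candidates are ranked in the top k
    unfold avgRep
    rw [le_div_iff₀ hnq]
    have hbound : ∀ i ∈ N', (lam:ℚ) ≤ ((App i ∩ topk r k).card : ℚ) := by
      intro i hi
      have hsub2 : N'.inf App ⊆ App i ∩ topk r k := by
        apply Finset.subset_inter _ hsub
        exact Finset.le_iff_subset.mp (Finset.inf_le hi)
      have h1 := Finset.card_le_card hsub2
      exact_mod_cast le_trans hNinf h1
    calc (lam:ℚ) * N'.card = ∑ _i ∈ N', (lam:ℚ) := by rw [Finset.sum_const, nsmul_eq_mul]; ring
      _ ≤ ∑ i ∈ N', ((App i ∩ topk r k).card:ℚ) := Finset.sum_le_sum hbound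
  · -- Case B : some common candidate c is not ranked within top k
    obtain ⟨c, hcmem, hctop⟩ := Finset.not_subset.mp hsub
    have hcApp : ∀ i ∈ N', c ∈ App i := by
      intro i hi
      exact Finset.le_iff_subset.mp (Finset.inf_le hi) hcmem
    have hck : k ≤ ((r.symm c : Fin m) : ℕ) := by
      by_contra h
      push_neg at h
      exact hctop (by simp [topk, h])
    -- k = K and numeric bounds
    have hkK : k = K := by
      have h1 : ((r.symm c : Fin m) : ℕ) < m := (r.symm c).isLt
      have h2 : k < m := lt_of_le_of_lt hck h1
      rcases le_or_gt K m with h | h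
      · rw [hkdef, min_eq_left h]
      · exfalso; rw [hkdef, min_eq_right (le_of_lt h)] at h2; omega
    have hxpos : (0:ℚ) < 5 * (lam : ℚ) / α ^ 2 + 1 / α := by positivity
    have hkQ : 5 * (lam : ℚ) / α ^ 2 + 1 / α ≤ (k : ℚ) := by
      rw [hkK, hK]
      have h1 : ((⌈5 * (lam : ℚ) / α ^ 2 + 1 / α⌉.toNat : ℤ) : ℚ) = ((⌈5 * (lam : ℚ) / α ^ 2 + 1 / α⌉ : ℤ) : ℚ) := by
        rw [Int.toNat_of_nonneg (Int.ceil_nonneg (le_of_lt hxpos))]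
      have h2 := Int.le_ceil (5 * (lam : ℚ) / α ^ 2 + 1 / α)
      push_cast at h1 ⊢
      rw [h1]
      exact h2
    have hαk : 5 * (lam:ℚ) / α + 1 ≤ α * (k:ℚ) := by
      have heq : α * (5 * (lam:ℚ) / α ^ 2 + 1 / α) = 5 * (lam:ℚ) / α + 1 := by
        field_simp
      calc 5 * (lam:ℚ) / α + 1 = α * (5 * (lam:ℚ) / α ^ 2 + 1 / α) := heq.symm
        _ ≤ α * (k:ℚ) := by
          apply mul_le_mul_of_nonneg_left hkQ (le_of_lt hα0)
    have h5lam : (5:ℚ) * (lam:ℚ) ≤ 5 * (lam:ℚ) / α := by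
      rw [le_div_iff₀ hα0]
      nlinarith
    have hk6Q : (6:ℚ) ≤ (k:ℚ) := by
      have h1 : α * (k:ℚ) ≤ (k:ℚ) := by
        have hk0 : (0:ℚ) ≤ (k:ℚ) := by positivity
        nlinarith
      nlinarith
    have hk6 : 6 ≤ k := by exact_mod_cast hk6Q
    -- the group load
    set L : ℕ → ℚ := fun t => ∑ i ∈ N', load t i with hL
    have hLdef : ∀ s, L s = ∑ i ∈ N', load s i := fun _ => rfl
    have hL0 : L 0 = 0 := by simp [hLdef, hload0]
    have hmono' : ∀ t, t < m → ∀ i, load t i ≤ load (t+1) i := fun t ht i => hmono ⟨t, ht⟩ i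
    have hload_nonneg : ∀ t, t ≤ m → ∀ i, (0:ℚ) ≤ load t i := by
      intro t
      induction t with
      | zero => intro _ i; rw [hload0]
      | succ t IH =>
        intro h i
        exact le_trans (IH (by omega) i) (hmono' t (by omega) i)
    have hLnonneg : ∀ t, t ≤ m → (0:ℚ) ≤ L t := by
      intro t ht
      rw [hLdef]
      exact Finset.sum_nonneg (fun i _ => hload_nonneg t ht i)
    have hLstep : ∀ t, t < m → L t ≤ L (t+1) := by
      intro t ht
      rw [hLdef, hLdef]
      exact Finset.sum_le_sum (fun i _ => hmono' t ht i)
    have hLle : ∀ s t, s ≤ t → t ≤ m → L s ≤ L t := by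
      intro s t hst htm
      induction t with
      | zero =>
        have h0 : s = 0 := Nat.le_zero.mp hst
        rw [h0]
      | succ t IH =>
        rcases Nat.eq_or_lt_of_le hst with h | h
        · rw [h]
        · exact le_trans (IH (by omega) (by omega)) (hLstep t (by omega))
    have hLdelta : ∀ t, t < m → L (t+1) ≤ L t + 1 := by
      intro t ht
      have h1 := hsum1 ⟨t, ht⟩
      have h2 : ∑ i ∈ N', (load (t+1) i - load t i) ≤ ∑ i, (load (t+1) i - load t i) := by
        apply Finset.sum_le_sum_of_subset_of_nonneg (Finset.subset_univ N')
        intro i _ _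
        have := hmono' t ht i
        linarith
      rw [h1] at h2
      rw [Finset.sum_sub_distrib] at h2
      rw [hLdef, hLdef]
      linarith
    have hsumload : ∀ t, t ≤ m → ∑ i, load t i = (t:ℚ) := by
      intro t
      induction t with
      | zero => intro _; simp [hload0]
      | succ t IH =>
        intro h
        have h1 := hsum1 ⟨t, by omega⟩
        rw [Finset.sum_sub_distrib] at h1
        have h2 := IH (by omega)
        push_cast
        have : (∑ i, load (t+1) i) - (∑ i, load t i) = 1 := h1
        linarith
    -- MAIN CAP LEMMA: while c is unranked every load is at most (L t + 1)/|N'|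
    have hcap : ∀ t, t < k → ∀ i, load (t+1) i ≤ (L t + 1) / (N'.card:ℚ) := by
      intro t
      induction t using Nat.strong_induction_on with
      | _ t IH =>
        intro htk i
        have htm : t < m := lt_of_lt_of_le htk hkm
        have hprev : ∀ j, load t j ≤ (L t + 1) / (N'.card:ℚ) := by
          intro j
          rcases Nat.eq_zero_or_pos t with h0' | hpos
          · subst h0'
            rw [hload0, hL0]
            positivity
          · have h1 : t - 1 < t := by omega
            have h2 := IH (t-1) h1 (by omega) j
            have h3 : t - 1 + 1 = t := by omega
            rw [h3] at h2
            refine le_trans h2 ?_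
            have h4 := hLle (t-1) t (by omega) (le_of_lt htm)
            have h5 : L (t-1) + 1 ≤ L t + 1 := by linarith
            gcongr
        -- the distribution on N' levelling everyone exactly to the cap
        set cap := (L t + 1) / (N'.card:ℚ) with hcapdef
        set δ : Fin n → ℚ := fun j => if j ∈ N' then cap - load t j else 0 with hδ
        have hδ0 : ∀ j, (0:ℚ) ≤ δ j := by
          intro j
          rw [hδ]
          dsimp only
          split
          · have := hprev j; linarith
          · exact le_refl (0:ℚ)
        have hδapp : ∀ j, δ j ≠ 0 → c ∈ App j := by
          intro j hj
          rw [hδ] at hj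
          dsimp only at hj
          by_cases h : j ∈ N'
          · exact hcApp j h
          · simp [h] at hj
        have hδsum : ∑ j, δ j = 1 := by
          rw [hδ]
          dsimp only
          rw [Finset.sum_ite_mem, Finset.univ_inter, Finset.sum_sub_distrib,
            Finset.sum_const, nsmul_eq_mul, hcapdef]
          rw [mul_div_cancel₀ _ (ne_of_gt hnq)]
          rw [← hLdef]
          ring
        have hle : ((⟨t, htm⟩ : Fin m) : ℕ) ≤ ((r.symm c : Fin m) : ℕ) := by
          show t ≤ _
          exact le_trans (le_of_lt htk) hck
        obtain ⟨j, hj⟩ := hopt ⟨t, htm⟩ c hle δ hδ0 hδapp hδsum i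
        by_cases hjN : j ∈ N'
        · rw [hδ] at hj
          simp only [hjN, if_true] at hj
          calc load (t+1) i ≤ load t j + (cap - load t j) := hj
            _ = cap := by ring
        · rw [hδ] at hj
          simp only [hjN, if_false] at hj
          calc load (t+1) i ≤ load t j + 0 := hj
            _ = load t j := by ring
            _ ≤ cap := hprev j
    -- growth of the group load
    have hka : ∀ t, t < k → α * ((t:ℚ)+1) ≤ L t + 1 := by
      intro t htk
      have htm : t + 1 ≤ m := by
        have := lt_of_lt_of_le htk hkm
        omega
      have h1 : ((t:ℚ)+1) = ∑ i, load (t+1) i := by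
        rw [hsumload (t+1) htm]
        push_cast
        ring
      have h2 : ∑ i, load (t+1) i ≤ (n:ℚ) * ((L t + 1)/(N'.card:ℚ)) := by
        calc ∑ i, load (t+1) i ≤ ∑ _i : Fin n, (L t + 1)/(N'.card:ℚ) :=
              Finset.sum_le_sum (fun i _ => hcap t htk i)
          _ = (n:ℚ) * ((L t + 1)/(N'.card:ℚ)) := by
              rw [Finset.sum_const, nsmul_eq_mul, Finset.card_univ, Fintype.card_fin]
      have h3 : (0:ℚ) ≤ (L t + 1)/(N'.card:ℚ) := by
        have h0 : (0:ℚ) ≤ L t := hLnonneg t (by omega)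
        positivity
      have h4 : α * ((t:ℚ)+1) ≤ α * ((n:ℚ) * ((L t + 1)/(N'.card:ℚ))) := by
        apply mul_le_mul_of_nonneg_left _ (le_of_lt hα0)
        rw [h1]; exact h2
      have h6 : (α * n) * ((L t+1)/(N'.card:ℚ)) ≤ (N'.card:ℚ) * ((L t+1)/(N'.card:ℚ)) :=
        mul_le_mul_of_nonneg_right hαn h3
      have h7 : (N'.card:ℚ) * ((L t+1)/(N'.card:ℚ)) = L t + 1 := by
        field_simp
      have h5 : α * ((n:ℚ) * ((L t + 1)/(N'.card:ℚ))) = (α * n) * ((L t+1)/(N'.card:ℚ)) := by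
        ring
      linarith
    -- big total group load at the end
    have hB : 4*(lam:ℚ) + 1 ≤ L (k-1) := by
      have h1 := hka (k-1) (by omega)
      have h2 : (((k-1:ℕ)):ℚ) + 1 = (k:ℚ) := by
        have : (((k-1:ℕ)):ℚ) = (k:ℚ) - 1 := by
          push_cast [Nat.cast_sub (by omega : 1 ≤ k)]
          ring
        rw [this]; ring
      rw [h2] at h1
      linarith
    -- threshold times (defined abstractly via choice, to avoid unfolding)
    have htauex : ∀ j, ∃ T, j ≤ 2*lam →
        ((2*(j:ℚ)) ≤ L (T+1) ∧ T ≤ k-2 ∧ L T ≤ 2*(j:ℚ)) := by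
      intro j
      by_cases hj : j ≤ 2*lam
      · have hjQ : ((j:ℚ)) ≤ 2*(lam:ℚ) := by exact_mod_cast hj
        have hex : ∃ t, (2*(j:ℚ)) ≤ L (t+1) := by
          refine ⟨k-2, ?_⟩
          have h1 : k - 2 + 1 = k - 1 := by omega
          rw [h1]
          linarith
        refine ⟨Nat.find hex, fun _ => ⟨Nat.find_spec hex, ?_, ?_⟩⟩
        · apply Nat.find_le
          have h1 : k - 2 + 1 = k - 1 := by omega
          rw [h1]
          linarith
        · rcases Nat.eq_zero_or_pos (Nat.find hex) with h | h
          · rw [h, hL0]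
            positivity
          · have h2 : Nat.find hex - 1 < Nat.find hex := by omega
            have h3 := Nat.find_min hex h2
            push_neg at h3
            have h4 : Nat.find hex - 1 + 1 = Nat.find hex := by omega
            rw [h4] at h3
            exact le_of_lt h3
      · exact ⟨0, fun h => absurd h hj⟩
    choose tau htauP using htauex
    have htauspec : ∀ j, j ≤ 2*lam → (2*(j:ℚ)) ≤ L (tau j + 1) := fun j hj => (htauP j hj).1
    have htaule : ∀ j, j ≤ 2*lam → tau j ≤ k - 2 := fun j hj => (htauP j hj).2.1
    have htaumin : ∀ j, j ≤ 2*lam → L (tau j) ≤ 2*(j:ℚ) := fun j hj => (htauP j hj).2.2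
    have htaustep : ∀ j, j ≤ 2*lam → L (tau j + 1) ≤ 2*(j:ℚ) + 1 := by
      intro j hj
      have h1 : tau j < m := by
        have := htaule j hj
        omega
      have h2 := hLdelta (tau j) h1
      have h3 := htaumin j hj
      linarith
    have htaumono : ∀ j j', j < j' → j' ≤ 2*lam → tau j < tau j' := by
      intro j j' hjj hj'
      by_contra h
      push_neg at h
      have h1 : L (tau j' + 1) ≤ L (tau j + 1) := by
        apply hLle _ _ (by omega)
        have := htaule j (by omega)
        omega
      have h2 := htauspec j' hj'
      have h3 := htaustep j (by omega)
      have h4 : 2*(j:ℚ) + 1 < 2*(j':ℚ) := by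
        have : (j:ℚ) + 1 ≤ (j':ℚ) := by exact_mod_cast hjj
        linarith
      linarith
    have htaumono' : ∀ j j', j ≤ j' → j' ≤ 2*lam → tau j ≤ tau j' := by
      intro j j' hjj hj'
      rcases Nat.eq_or_lt_of_le hjj with h | h
      · rw [h]
      · exact le_of_lt (htaumono j j' h hj')
    -- the service predicate : voter i receives load in window j
    set P : Fin n → ℕ → Prop :=
      fun i j => ∃ s, s ∈ Finset.Icc (tau (j-1) + 1) (tau j) ∧ load (s+1) i ≠ load s i with hP
    -- window lemma : in each window at least half the group is served
    have hwin : ∀ j, 1 ≤ j → j ≤ 2*lam →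
        (N'.card:ℚ) ≤ 2 * ((N'.filter (fun i => P i j)).card : ℚ) := by
      intro j hj1 hj2
      have hjm : j - 1 ≤ 2*lam := by omega
      have htk' : tau j < k := by
        have := htaule j hj2
        omega
      have htm : tau j < m := lt_of_lt_of_le htk' hkm
      set t := tau j with ht
      set d := L (t+1) - L t with hd
      have hd0 : (0:ℚ) ≤ d := by
        have := hLstep t htm
        rw [hd]
        linarith
      have hd1 : d ≤ 1 := by
        have := hLdelta t htm
        rw [hd]
        linarith
      have htprev : tau (j-1) < t := htaumono (j-1) j (by omega) hj2
      -- frozen loads for unserved voters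
      have hfreeze : ∀ i, ¬ P i j → load (t+1) i = load (tau (j-1) + 1) i := by
        intro i hnp
        have hnp' : ∀ s, s ∈ Finset.Icc (tau (j-1) + 1) (tau j) → load (s+1) i = load s i := by
          intro s hs
          by_contra hne
          exact hnp ⟨s, hs, hne⟩
        have key : ∀ u, tau (j-1) + 1 + u ≤ t + 1 →
            load (tau (j-1) + 1 + u) i = load (tau (j-1) + 1) i := by
          intro u
          induction u with
          | zero => intro _; rfl
          | succ u IH =>
            intro hu
            have h1 : tau (j-1) + 1 + u ≤ t := by omega
            have h3 := hnp' (tau (j-1) + 1 + u) (Finset.mem_Icc.mpr ⟨by omega, h1⟩)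
            have h4 : tau (j-1) + 1 + (u + 1) = tau (j-1) + 1 + u + 1 := by omega
            rw [h4, h3]
            exact IH (by omega)
        have h5 := key (t - tau (j-1)) (by omega)
        have h6 : tau (j-1) + 1 + (t - tau (j-1)) = t + 1 := by omega
        rw [h6] at h5
        exact h5
      have hUbound : ∀ i, ¬ P i j → load (t+1) i ≤ (2*(j:ℚ) - 1)/(N'.card:ℚ) := by
        intro i hnp
        rw [hfreeze i hnp]
        have h1 : tau (j-1) < k := by
          have := htaule (j-1) hjm
          omega
        have h2 := hcap (tau (j-1)) h1 i
        refine le_trans h2 ?_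
        have h3 : L (tau (j-1)) + 1 ≤ 2*(j:ℚ) - 1 := by
          have h4 := htaumin (j-1) hjm
          have h5 : ((j:ℚ)) - 1 = (((j-1:ℕ)):ℚ) := by
            push_cast [Nat.cast_sub (by omega : 1 ≤ j)]
            ring
          nlinarith [h4, h5]
        gcongr
      -- total deficiency over the group is 1 - d
      have hsumdef : ∑ i ∈ N', ((L t + 1)/(N'.card:ℚ) - load (t+1) i) = 1 - d := by
        rw [Finset.sum_sub_distrib, Finset.sum_const, nsmul_eq_mul,
          mul_div_cancel₀ _ (ne_of_gt hnq), ← hLdef, hd]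
        ring
      set U := N'.filter (fun i => ¬ P i j) with hU
      have hterm : ∀ i ∈ U, (2 - d)/(N'.card:ℚ) ≤ (L t + 1)/(N'.card:ℚ) - load (t+1) i := by
        intro i hiU
        have hnp := (Finset.mem_filter.mp hiU).2
        have h1 := hUbound i hnp
        have h2 : (2*(j:ℚ)) - d ≤ L t := by
          have h3 := htauspec j hj2
          rw [hd]
          linarith
        have h4 : (2 - d)/(N'.card:ℚ) ≤ (L t + 1 - (2*(j:ℚ)-1))/(N'.card:ℚ) := by
          rw [div_le_div_iff_of_pos_right hnq]
          linarith
        have h5 : (L t + 1 - (2*(j:ℚ)-1))/(N'.card:ℚ)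
            = (L t + 1)/(N'.card:ℚ) - (2*(j:ℚ)-1)/(N'.card:ℚ) := by
          ring
        rw [h5] at h4
        linarith
      have hcardU : (U.card:ℚ) * ((2-d)/(N'.card:ℚ)) ≤ 1 - d := by
        calc (U.card:ℚ) * ((2-d)/(N'.card:ℚ)) = ∑ _i ∈ U, ((2-d)/(N'.card:ℚ)) := by
              rw [Finset.sum_const, nsmul_eq_mul]
          _ ≤ ∑ i ∈ U, ((L t + 1)/(N'.card:ℚ) - load (t+1) i) := Finset.sum_le_sum hterm
          _ ≤ ∑ i ∈ N', ((L t + 1)/(N'.card:ℚ) - load (t+1) i) := by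
              apply Finset.sum_le_sum_of_subset_of_nonneg (Finset.filter_subset _ _)
              intro i hiN _
              have := hcap t htk' i
              linarith
          _ = 1 - d := hsumdef
      have h2d : (0:ℚ) < 2 - d := by linarith
      have hcardU' : (U.card:ℚ) * (2 - d) ≤ (1 - d) * (N'.card:ℚ) := by
        have h1 := mul_le_mul_of_nonneg_right hcardU (le_of_lt hnq)
        calc (U.card:ℚ) * (2-d) = (U.card:ℚ) * ((2-d)/(N'.card:ℚ)) * (N'.card:ℚ) := by
              field_simp
          _ ≤ (1-d) * (N'.card:ℚ) := h1
      have hUle : 2 * (U.card:ℚ) ≤ (N'.card:ℚ) := by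
        have hU0 : (0:ℚ) ≤ (U.card:ℚ) := by positivity
        nlinarith [hcardU', hd0, hd1, hnq, hU0]
      have hUS : (N'.filter (fun i => P i j)).card + U.card = N'.card := by
        rw [hU]
        exact Finset.card_filter_add_card_filter_not (p := fun i => P i j)
      have hUSQ : ((N'.filter (fun i => P i j)).card : ℚ) + (U.card:ℚ) = (N'.card:ℚ) := by
        exact_mod_cast congrArg (Nat.cast : ℕ → ℚ) hUS
      linarith
    -- summing over the 2λ windows
    set J := Finset.Icc 1 (2*lam) with hJ
    have hJcard : J.card = 2*lam := by
      rw [hJ, Nat.card_Icc]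
      omega
    have hsumS : (lam:ℚ) * (N'.card:ℚ) ≤ ∑ j ∈ J, ((N'.filter (fun i => P i j)).card : ℚ) := by
      have h1 : ∀ j ∈ J, (N'.card:ℚ)/2 ≤ ((N'.filter (fun i => P i j)).card : ℚ) := by
        intro j hj
        rw [hJ, Finset.mem_Icc] at hj
        have := hwin j hj.1 hj.2
        linarith
      calc (lam:ℚ) * (N'.card:ℚ) = ((2*lam : ℕ):ℚ) * ((N'.card:ℚ)/2) := by
            push_cast
            ring
        _ = ∑ _j ∈ J, ((N'.card:ℚ)/2) := by
            rw [Finset.sum_const, hJcard, nsmul_eq_mul]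
        _ ≤ ∑ j ∈ J, ((N'.filter (fun i => P i j)).card : ℚ) := Finset.sum_le_sum h1
    -- double counting
    have hswap : ∑ j ∈ J, (N'.filter (fun i => P i j)).card
        = ∑ i ∈ N', (J.filter (fun j => P i j)).card := by
      simp_rw [Finset.card_filter]
      exact Finset.sum_comm
    -- served windows inject into approved top-k alternatives
    have hinj : ∀ i ∈ N', (J.filter (fun j => P i j)).card ≤ (App i ∩ topk r k).card := by
      intro i hi
      set F := J.filter (fun j => P i j) with hF
      set w : ℕ → ℕ := fun j =>
        if h : ∃ s, s ∈ Finset.Icc (tau (j-1) + 1) (tau j) ∧ load (s+1) i ≠ load s i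
        then h.choose else 0 with hw
      have hwspec : ∀ j ∈ F, (w j ∈ Finset.Icc (tau (j-1)+1) (tau j)) ∧
          load (w j + 1) i ≠ load (w j) i := by
        intro j hj
        have h := (Finset.mem_filter.mp hj).2
        have h' : ∃ s, s ∈ Finset.Icc (tau (j-1) + 1) (tau j) ∧ load (s+1) i ≠ load s i := h
        rw [hw]
        dsimp only
        rw [dif_pos h']
        exact h'.choose_spec
      have hjJ : ∀ j ∈ F, 1 ≤ j ∧ j ≤ 2*lam := by
        intro j hj
        have h := (Finset.mem_filter.mp hj).1
        rw [hJ, Finset.mem_Icc] at h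
        exact h
      have hwk : ∀ j ∈ F, w j < k := by
        intro j hj
        have h1 := (hwspec j hj).1
        rw [Finset.mem_Icc] at h1
        have h2 := (hjJ j hj).2
        have := htaule j h2
        omega
      rw [hF]
      apply Finset.card_le_card_of_injOn (fun j => r ⟨w j % m, Nat.mod_lt _ hm⟩)
      · intro j hj
        have hwm' : w j < m := lt_of_lt_of_le (hwk j hj) hkm
        have hmod : w j % m = w j := Nat.mod_eq_of_lt hwm'
        rw [Finset.mem_coe, Finset.mem_inter]
        constructor
        · apply happr ⟨w j % m, Nat.mod_lt _ hm⟩ i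
          show load (w j % m + 1) i ≠ load (w j % m) i
          rw [hmod]
          exact (hwspec j hj).2
        · simp only [topk, Finset.mem_filter, Finset.mem_univ, true_and,
            Equiv.symm_apply_apply]
          show w j % m < k
          rw [hmod]
          exact hwk j hj
      · intro j1 hj1 j2 hj2 heq
        by_contra hne
        have hj1F : j1 ∈ F := hj1
        have hj2F : j2 ∈ F := hj2
        rcases lt_trichotomy j1 j2 with h | h | h
        · have h1 := (hwspec j1 hj1F).1
          have h2 := (hwspec j2 hj2F).1
          rw [Finset.mem_Icc] at h1 h2
          have h3 : tau j1 ≤ tau (j2-1) := by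
            apply htaumono' j1 (j2-1) (by omega)
            have := (hjJ j2 hj2F).2
            omega
          have h5 : w j1 % m = w j1 := Nat.mod_eq_of_lt (lt_of_lt_of_le (hwk j1 hj1F) hkm)
          have h6 : w j2 % m = w j2 := Nat.mod_eq_of_lt (lt_of_lt_of_le (hwk j2 hj2F) hkm)
          have h7 := r.injective heq
          have h8 : w j1 % m = w j2 % m := by
            have := congrArg (fun x : Fin m => (x:ℕ)) h7
            simpa using this
          omega
        · exact hne h
        · have h1 := (hwspec j1 hj1F).1
          have h2 := (hwspec j2 hj2F).1
          rw [Finset.mem_Icc] at h1 h2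
          have h3 : tau j2 ≤ tau (j1-1) := by
            apply htaumono' j2 (j1-1) (by omega)
            have := (hjJ j1 hj1F).2
            omega
          have h5 : w j1 % m = w j1 := Nat.mod_eq_of_lt (lt_of_lt_of_le (hwk j1 hj1F) hkm)
          have h6 : w j2 % m = w j2 := Nat.mod_eq_of_lt (lt_of_lt_of_le (hwk j2 hj2F) hkm)
          have h7 := r.injective heq
          have h8 : w j1 % m = w j2 % m := by
            have := congrArg (fun x : Fin m => (x:ℕ)) h7
            simpa using this
          omega
    -- conclusion
    unfold avgRep
    rw [le_div_iff₀ hnq]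
    have c1 : ((∑ j ∈ J, (N'.filter (fun i => P i j)).card : ℕ) : ℚ)
        = ∑ j ∈ J, ((N'.filter (fun i => P i j)).card : ℚ) := by
      push_cast
      rfl
    have c2 : ((∑ i ∈ N', (J.filter (fun j => P i j)).card : ℕ) : ℚ)
        = ∑ i ∈ N', ((J.filter (fun j => P i j)).card : ℚ) := by
      push_cast
      rfl
    have c3 : ∑ i ∈ N', ((J.filter (fun j => P i j)).card : ℚ)
        ≤ ∑ i ∈ N', ((App i ∩ topk r k).card : ℚ) := by
      apply Finset.sum_le_sum
      intro i hi
      exact_mod_cast hinj i hi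
    have c4 : ∑ j ∈ J, ((N'.filter (fun i => P i j)).card : ℚ)
        = ∑ i ∈ N', ((J.filter (fun j => P i j)).card : ℚ) := by
      rw [← c1, ← c2]
      exact_mod_cast congrArg (Nat.cast : ℕ → ℚ) hswap
    linarith
end

section
/- Let S ⊆ A be a set of alternatives, N' ⊆ N a group of voters, and z = Σ_{i∈N'} |A_i ∩ S|. Suppose a ∈ S minimizes the PAV-score decrease w_PAV(S) − w_PAV(S∖{·}) among all alternatives of S, and let z' = Σ_{i∈N'} |A_i ∩ (S∖{a})|, with z' < z. Then for every b ∈ S, w_PAV(S) − w_PAV(S∖{b}) ≥ (z−z')²/z. -/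
open Finset

/-- The PAV-score of a set `S` of alternatives: `∑_i ∑_{j=1}^{|A_i ∩ S|} 1/j`. -/
def pavScore {n m : ℕ} (App : Fin n → Finset (Fin m)) (S : Finset (Fin m)) : ℚ :=
  ∑ i, ∑ j ∈ Finset.range (App i ∩ S).card, (1 : ℚ) / (j + 1)

/-!
Removing `b` from `S` lowers the harmonic term of each voter `i` approving `b` by
`1 / |A_i ∩ S|`, so the score decrease caused by `a` is `∑ 1 / |A_i ∩ S|` over the voters
approving `a`. Exactly `z - z'` voters of `N'` approve `a`, and their values `|A_i ∩ S|` sum to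
at most `z`; by Sedrakyan's form of Cauchy–Schwarz the sum of their reciprocals is at least
`(z - z')² / z`. Minimality of `a` transfers the bound to every `b ∈ S`.
-/

lemma sq_card_div_le_sum_one_div {ι R : Type*} [Field R] [LinearOrder R] [IsStrictOrderedRing R]
    {s : Finset ι} (hs : s.Nonempty) {c : ι → R} (hc : ∀ i ∈ s, 0 < c i) {z : R}
    (hz : ∑ i ∈ s, c i ≤ z) :
    (#s : R) ^ 2 / z ≤ ∑ i ∈ s, 1 / c i :=
  calc (#s : R) ^ 2 / z
      = (∑ _i ∈ s, (1 : R)) ^ 2 / z := by rw [sum_const, nsmul_one]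
    _ ≤ (∑ _i ∈ s, (1 : R)) ^ 2 / ∑ i ∈ s, c i :=
        div_le_div_of_nonneg_left (sq_nonneg _) (sum_pos hc hs) hz
    _ ≤ ∑ i ∈ s, 1 / c i := by
        simpa only [one_pow] using sq_sum_div_le_sum_sq_div s (fun _ => (1 : R)) hc

section CardInterErase

variable {α ι : Type*} [DecidableEq α]

lemma card_inter_erase_add_ite {X S : Finset α} {a : α} (ha : a ∈ S) :
    #(X ∩ S.erase a) + (if a ∈ X then 1 else 0) = #(X ∩ S) := by
  rw [inter_erase]
  split_ifs with haX
  · exact card_erase_add_one (mem_inter.mpr ⟨haX, ha⟩)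
  · rw [erase_eq_of_notMem (fun h => haX (mem_inter.mp h).1), add_zero]

lemma sum_card_inter_erase_add_card_filter (A : ι → Finset α) (N : Finset ι)
    {S : Finset α} {a : α} (ha : a ∈ S) :
    ∑ i ∈ N, #(A i ∩ S.erase a) + #{i ∈ N | a ∈ A i} = ∑ i ∈ N, #(A i ∩ S) := by
  rw [card_filter, ← sum_add_distrib]
  exact sum_congr rfl fun i _ => card_inter_erase_add_ite ha

lemma harmonic_card_inter_sub_harmonic_card_inter_erase (X : Finset α) {S : Finset α} {b : α}
    (hb : b ∈ S) :
    harmonic #(X ∩ S) - harmonic #(X ∩ S.erase b) =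
      if b ∈ X then 1 / (#(X ∩ S) : ℚ) else 0 := by
  rw [← card_inter_erase_add_ite (X := X) hb]
  split_ifs
  · rw [harmonic_succ]
    push_cast
    ring
  · simp

end CardInterErase

section PAV

variable {n m : ℕ} (App : Fin n → Finset (Fin m))

lemma pavScore_eq_sum_harmonic (S : Finset (Fin m)) :
    pavScore App S = ∑ i, harmonic #(App i ∩ S) := by
  simp only [pavScore, harmonic, one_div, Nat.cast_add, Nat.cast_one]

lemma pavScore_sub_pavScore_erase {S : Finset (Fin m)} {b : Fin m} (hb : b ∈ S) :
    pavScore App S - pavScore App (S.erase b) = ∑ i with b ∈ App i, 1 / (#(App i ∩ S) : ℚ) := by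
  simp only [pavScore_eq_sum_harmonic, ← sum_sub_distrib,
    harmonic_card_inter_sub_harmonic_card_inter_erase _ hb, sum_ite, sum_const_zero, add_zero]

end PAV

theorem rev_seqpav_score_decrease_lower_bound_general
    {n m : ℕ} (App : Fin n → Finset (Fin m))
    (S : Finset (Fin m)) (N' : Finset (Fin n)) (a : Fin m) (ha : a ∈ S)
    (hmin : ∀ b ∈ S, pavScore App S - pavScore App (S.erase a) ≤
      pavScore App S - pavScore App (S.erase b))
    (z z' : ℕ) (hz : z = ∑ i ∈ N', (App i ∩ S).card)
    (hz' : z' = ∑ i ∈ N', (App i ∩ S.erase a).card) (hlt : z' < z) :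
    ∀ b ∈ S, ((z : ℚ) - (z' : ℚ)) ^ 2 / (z : ℚ) ≤
      pavScore App S - pavScore App (S.erase b) := by
  intro b hb
  refine le_trans ?_ (hmin b hb)
  set T := {i ∈ N' | a ∈ App i}
  have hcount : z' + #T = z := by
    rw [hz, hz', sum_card_inter_erase_add_card_filter App N' ha]
  have hT : (z : ℚ) - z' = #T := by
    rw [← hcount]
    push_cast
    ring
  have hTne : T.Nonempty := card_pos.mp (by omega)
  have hpos : ∀ i ∈ T, 0 < (#(App i ∩ S) : ℚ) := fun i hi =>
    Nat.cast_pos.mpr (card_pos.mpr ⟨a, mem_inter.mpr ⟨(mem_filter.mp hi).2, ha⟩⟩)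
  have hsumT : ∑ i ∈ T, (#(App i ∩ S) : ℚ) ≤ z := by
    rw [hz]
    push_cast
    exact sum_le_sum_of_subset_of_nonneg (filter_subset _ _) fun _ _ _ => by positivity
  calc ((z : ℚ) - z') ^ 2 / z
      ≤ ∑ i ∈ T, 1 / (#(App i ∩ S) : ℚ) := hT ▸ sq_card_div_le_sum_one_div hTne hpos hsumT
    _ ≤ ∑ i with a ∈ App i, 1 / (#(App i ∩ S) : ℚ) :=
        sum_le_sum_of_subset_of_nonneg (filter_subset_filter _ (subset_univ N'))
          fun _ _ _ => by positivity
    _ = pavScore App S - pavScore App (S.erase a) := (pavScore_sub_pavScore_erase App ha).symm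

theorem rev_seqpav_score_decrease_lower_bound
    {n m : ℕ} (App : Fin n → Finset (Fin m)) (hApp : ∀ i, (App i).Nonempty)
    (S : Finset (Fin m)) (N' : Finset (Fin n)) (a : Fin m) (ha : a ∈ S)
    (hmin : ∀ b ∈ S, pavScore App S - pavScore App (S.erase a) ≤
      pavScore App S - pavScore App (S.erase b))
    (z z' : ℕ) (hz : z = ∑ i ∈ N', (App i ∩ S).card)
    (hz' : z' = ∑ i ∈ N', (App i ∩ S.erase a).card) (hlt : z' < z) :
    ∀ b ∈ S, ((z : ℚ) - (z' : ℚ)) ^ 2 / (z : ℚ) ≤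
      pavScore App S - pavScore App (S.erase b) :=
  rev_seqpav_score_decrease_lower_bound_general App S N' a ha hmin z z' hz hz' hlt
end

section
/- Consider the approval profile with alternatives A = {a,b,c} and six voters with approval sets A_1 = {a}, A_2 = {a,b}, A_3 = {b}, A_4 = {b,c}, A_5 = {c}, and A_6 = {a,c}. Then (i) every ranking r of A satisfies q_P(r) ≤ 2/3 — indeed, for every ranking r there exists a group N' of three voters with jd(N',2) = 1 and avg(N', r_{≤2}) = 2/3 — and (ii) there exists a ranking r of A with q_P(r) ≥ 2/3. -/
open Finset

/-- Approval score of alternative `a`. -/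
def approvalScore {n m : ℕ} (App : Fin n → Finset (Fin m)) (a : Fin m) : ℕ :=
  (Finset.univ.filter fun i => a ∈ App i).card

/-- The justifiable demand of the group `N'` with respect to the top `k` positions:
`min(⌊(|N'|/n)·k⌋, |⋂_{i ∈ N'} A_i|)`. -/
def jd {n m : ℕ} (App : Fin n → Finset (Fin m)) (N' : Finset (Fin n)) (k : ℕ) : ℕ :=
  min (⌊((N'.card : ℚ) / (n : ℚ)) * (k : ℚ)⌋.toNat) (N'.inf App).card

/-- The profile of Example 2: alternatives `a = 0`, `b = 1`, `c = 2` and six voters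
with approval sets `{a}, {a,b}, {b}, {b,c}, {c}, {a,c}`. -/
def exProfile : Fin 6 → Finset (Fin 3) :=
  ![{0}, {0, 1}, {1}, {1, 2}, {2}, {0, 2}]

/-! Every alternative has exactly three supporters and any two voters share at most one
alternative. So a group with positive justifiable demand for some `k ≤ 3` lies among the
supporters of a common alternative, has at least two members, and demands exactly one
alternative. The supporters of the alternative ranked last approve only two of the six slots
of the top two, which gives `2/3`; any other full supporter set gets at least that, and for
`k = 3` every voter is represented. -/

section General

variable {n m : ℕ} (App : Fin n → Finset (Fin m))

def supporters (a : Fin m) : Finset (Fin n) :=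
  univ.filter fun i => a ∈ App i

variable {App}

theorem subset_supporters_of_mem_inf {N' : Finset (Fin n)} {a : Fin m}
    (ha : a ∈ N'.inf App) : N' ⊆ supporters App a := fun i hi =>
  mem_filter.2 ⟨mem_univ i, (Finset.inf_le hi : N'.inf App ≤ App i) ha⟩

theorem jd_eq_min_div (N' : Finset (Fin n)) (k : ℕ) :
    jd App N' k = min (#N' * k / n) #(N'.inf App) := by
  rw [jd, div_mul_eq_mul_div, ← Nat.cast_mul, Int.floor_toNat, Nat.floor_div_natCast,
    Nat.floor_natCast]

theorem avgRep_eq_div (N' : Finset (Fin n)) (S : Finset (Fin m)) :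
    avgRep App N' S = ((∑ i ∈ N', #(App i ∩ S) : ℕ) : ℚ) / #N' := by
  rw [avgRep, Nat.cast_sum]

theorem one_le_avgRep_univ (hApp : ∀ i, (App i).Nonempty) {N' : Finset (Fin n)}
    (hN : N'.Nonempty) : 1 ≤ avgRep App N' univ := by
  rw [avgRep_eq_div, one_le_div (by exact_mod_cast hN.card_pos), Nat.cast_le, card_eq_sum_ones]
  exact sum_le_sum fun i _ => by simpa using (hApp i).card_pos

theorem topk_of_le (r : Fin m ≃ Fin m) {k : ℕ} (hk : m ≤ k) : topk r k = univ :=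
  filter_true_of_mem fun a _ => (r.symm a).isLt.trans_le hk

theorem topk_last (r : Fin (m + 1) ≃ Fin (m + 1)) : topk r m = univ.erase (r (Fin.last m)) := by
  ext a
  simp only [topk, mem_filter, mem_erase, mem_univ, true_and, and_true]
  rw [Ne, ← Equiv.symm_apply_eq, ← Ne, ← Fin.lt_last_iff_ne_last, Fin.lt_def, Fin.val_last]

end General

section ExProfile

theorem exProfile_nonempty (i : Fin 6) : (exProfile i).Nonempty := by
  revert i; decide

theorem card_inter_exProfile_le_one {i j : Fin 6} (hij : i ≠ j) :
    #(exProfile i ∩ exProfile j) ≤ 1 := by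
  revert i j; decide

theorem card_supporters_exProfile (a : Fin 3) : #(supporters exProfile a) = 3 := by
  revert a; decide

theorem inf_supporters_exProfile (a : Fin 3) : (supporters exProfile a).inf exProfile = {a} := by
  revert a; decide

theorem sum_card_inter_erase_supporters_exProfile (a b : Fin 3) :
    ∑ i ∈ supporters exProfile a, #(exProfile i ∩ univ.erase b) = if a = b then 2 else 4 := by
  revert a b; decide

theorem card_inf_exProfile_le_one {N' : Finset (Fin 6)} (hN : 1 < #N') :
    #(N'.inf exProfile) ≤ 1 := by
  obtain ⟨i, hi, j, hj, hij⟩ := one_lt_card.1 hN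
  refine (card_le_card ?_).trans (card_inter_exProfile_le_one hij)
  exact le_inf (Finset.inf_le hi) (Finset.inf_le hj)

theorem exists_jd_eq_one_avgRep_eq (r : Fin 3 ≃ Fin 3) : ∃ N' : Finset (Fin 6), #N' = 3 ∧
    jd exProfile N' 2 = 1 ∧ avgRep exProfile N' (topk r 2) = 2 / 3 := by
  refine ⟨supporters exProfile (r (Fin.last 2)), card_supporters_exProfile _, ?_, ?_⟩
  · rw [jd_eq_min_div, card_supporters_exProfile, inf_supporters_exProfile, card_singleton]
    rfl
  · rw [avgRep_eq_div, topk_last r, sum_card_inter_erase_supporters_exProfile,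
      if_pos rfl, card_supporters_exProfile]
    norm_num

theorem two_thirds_le_avgRep_div_jd (r : Fin 3 ≃ Fin 3) {N' : Finset (Fin 6)} {k : ℕ}
    (hk : k ≤ 3) (hpos : 0 < jd exProfile N' k) :
    2 / 3 ≤ avgRep exProfile N' (topk r k) / jd exProfile N' k := by
  rw [jd_eq_min_div, lt_min_iff, Nat.div_pos_iff] at hpos
  obtain ⟨⟨-, hsize⟩, hinf⟩ := hpos
  obtain ⟨a, ha⟩ := card_pos.1 hinf
  have hsub := subset_supporters_of_mem_inf ha
  have hcard : #N' ≤ 3 := card_supporters_exProfile a ▸ card_le_card hsub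
  have hjd : jd exProfile N' k = 1 := by
    have := card_inf_exProfile_le_one (N' := N') (by nlinarith)
    rw [jd_eq_min_div]
    omega
  rw [hjd, Nat.cast_one, div_one]
  obtain rfl | rfl : k = 2 ∨ k = 3 := by interval_cases k <;> omega
  · obtain rfl : N' = supporters exProfile a := eq_of_subset_of_card_le hsub (by
      rw [card_supporters_exProfile]; omega)
    rw [avgRep_eq_div, topk_last r, sum_card_inter_erase_supporters_exProfile,
      card_supporters_exProfile]
    split_ifs <;> norm_num
  · rw [topk_of_le r le_rfl]
    exact le_trans (by norm_num) (one_le_avgRep_univ exProfile_nonempty (card_pos.1 (by omega)))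

end ExProfile

theorem example_profile_quality :
    -- (i) for every ranking there is a three-voter group with `jd(N', 2) = 1` but
    -- average representation `2/3` in the top two positions ...
    (∀ r : Fin 3 ≃ Fin 3, ∃ N' : Finset (Fin 6), N'.card = 3 ∧
      jd exProfile N' 2 = 1 ∧ avgRep exProfile N' (topk r 2) = 2 / 3) ∧
    -- ... hence every ranking has quality at most `2/3` ...
    (∀ r : Fin 3 ≃ Fin 3, ∃ (N' : Finset (Fin 6)) (k : ℕ), 1 ≤ k ∧ k ≤ 3 ∧
      0 < jd exProfile N' k ∧
      avgRep exProfile N' (topk r k) / (jd exProfile N' k : ℚ) ≤ 2 / 3) ∧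
    -- (ii) and some ranking has quality at least `2/3`.
    (∃ r : Fin 3 ≃ Fin 3, ∀ (N' : Finset (Fin 6)) (k : ℕ), 1 ≤ k → k ≤ 3 →
      0 < jd exProfile N' k →
      (2 : ℚ) / 3 ≤ avgRep exProfile N' (topk r k) / (jd exProfile N' k : ℚ)) := by
  refine ⟨exists_jd_eq_one_avgRep_eq, fun r => ?_, ⟨Equiv.refl _, fun N' k _ hk hpos =>
    two_thirds_le_avgRep_div_jd _ hk hpos⟩⟩
  obtain ⟨N', -, hjd, havg⟩ := exists_jd_eq_one_avgRep_eq r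
  exact ⟨N', 2, by norm_num, by norm_num, by rw [hjd]; norm_num, by rw [hjd, havg]; norm_num⟩
end

section
/- Run Phragmén's rule on an approval profile and let ℓ_i(t) denote the load of voter i after t steps. Let N' ⊆ N be a group of voters and suppose that after step t some alternative approved by all voters of N' is still unranked. Then Σ_{i∈N'} (max_{j∈N} ℓ_j(t) − ℓ_i(t)) ≤ 1. -/
/-!
Pour one unit of load onto a nonempty group `N'` so that its members all end at the same
level `c`, the water level of `N'`. Since the loads of `N'` fall short of the maximum load
by at most one in total (induction on `t`), `c` is at least the maximum, so this is a valid
distribution for the still unranked common alternative, and optimality of Phragmén's step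
bounds every new load by `c`. Loads only grow, so the new shortfall of `N'` is at most
`∑_{i ∈ N'} (c - ℓ_i(t)) = 1`.
-/

open Finset

/-- The level `c` with `∑ i ∈ N', (c - x i) = 1` when `N'` is nonempty. -/
def waterLevel {ι : Type*} (N' : Finset ι) (x : ι → ℚ) : ℚ :=
  (1 + ∑ i ∈ N', x i) / #N'

section WaterLevel

variable {ι : Type*} {N' : Finset ι} {x : ι → ℚ}

theorem sum_waterLevel_sub (hN : N'.Nonempty) : ∑ i ∈ N', (waterLevel N' x - x i) = 1 := by
  have hcard : (#N' : ℚ) ≠ 0 := by exact_mod_cast hN.card_ne_zero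
  rw [sum_sub_distrib, sum_const, nsmul_eq_mul, waterLevel]
  field_simp
  ring

theorem le_waterLevel_of_sum_sub_le_one (hN : N'.Nonempty) {L : ℚ}
    (h : ∑ i ∈ N', (L - x i) ≤ 1) : L ≤ waterLevel N' x := by
  have hcard : (0 : ℚ) < #N' := by exact_mod_cast hN.card_pos
  rw [sum_sub_distrib, sum_const, nsmul_eq_mul] at h
  rw [waterLevel, le_div_iff₀ hcard]
  linarith

end WaterLevel

namespace IsPhragmenExec

variable {n m : ℕ} {App : Fin n → Finset (Fin m)} {r : Fin m ≃ Fin m}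
  {load : ℕ → Fin n → ℚ}

theorem load_succ_le (hexec : IsPhragmenExec App r load) {s : ℕ} {b : Fin m}
    (hb : s < r.symm b) {δ : Fin n → ℚ} (hδ_nonneg : ∀ i, 0 ≤ δ i)
    (hδ_app : ∀ i, δ i ≠ 0 → b ∈ App i) (hδ_sum : ∑ i, δ i = 1) {c : ℚ}
    (hc : ∀ j, load s j + δ j ≤ c) (i : Fin n) : load (s + 1) i ≤ c := by
  obtain ⟨j, hj⟩ :=
    hexec.2.2.2.2 ⟨s, hb.trans (r.symm b).isLt⟩ b hb.le δ hδ_nonneg hδ_app hδ_sum i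
  exact hj.trans (hc j)

theorem load_succ_le_waterLevel (hexec : IsPhragmenExec App r load) {s : ℕ}
    (H : (univ : Finset (Fin n)).Nonempty) {N' : Finset (Fin n)} (hN : N'.Nonempty)
    {b : Fin m} (hbN : ∀ i ∈ N', b ∈ App i) (hb : s < r.symm b)
    (hexcess : ∑ i ∈ N', (univ.sup' H (load s) - load s i) ≤ 1) (i : Fin n) :
    load (s + 1) i ≤ waterLevel N' (load s) := by
  have hmax : ∀ j, load s j ≤ waterLevel N' (load s) := fun j =>
    (le_sup' (load s) (mem_univ j)).trans (le_waterLevel_of_sum_sub_le_one hN hexcess)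
  refine hexec.load_succ_le hb
    (δ := fun j => if j ∈ N' then waterLevel N' (load s) - load s j else 0) ?_ ?_ ?_ ?_ i
  · intro j
    split_ifs <;> linarith [hmax j]
  · intro j hj
    split_ifs at hj with hjN
    · exact hbN j hjN
    · exact absurd rfl hj
  · rw [sum_ite_mem, univ_inter, sum_waterLevel_sub hN]
  · intro j
    split_ifs <;> linarith [hmax j]

theorem sum_sup'_sub_le_one (hexec : IsPhragmenExec App r load)
    (H : (univ : Finset (Fin n)).Nonempty) (N' : Finset (Fin n)) :
    ∀ t, (∃ b, (∀ i ∈ N', b ∈ App i) ∧ t ≤ (r.symm b : ℕ)) →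
      ∑ i ∈ N', (univ.sup' H (load t) - load t i) ≤ 1
  | 0, _ => by
    have hzero : load 0 = 0 := funext hexec.1
    simp [hzero]
  | s + 1, ⟨b, hbN, (hb : s < r.symm b)⟩ => by
    rcases N'.eq_empty_or_nonempty with rfl | hN
    · simp
    have hexcess := hexec.sum_sup'_sub_le_one H N' s ⟨b, hbN, hb.le⟩
    have hsup := sup'_le H _ fun i _ => hexec.load_succ_le_waterLevel H hN hbN hb hexcess i
    calc ∑ i ∈ N', (univ.sup' H (load (s + 1)) - load (s + 1) i)
        ≤ ∑ i ∈ N', (waterLevel N' (load s) - load s i) :=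
          sum_le_sum fun i _ => by linarith [hexec.2.1 ⟨s, hb.trans (r.symm b).isLt⟩ i]
      _ = 1 := sum_waterLevel_sub hN

end IsPhragmenExec

theorem phragmen_excess_bound_general
    {n m : ℕ} (hn : 0 < n) (App : Fin n → Finset (Fin m))
    (r : Fin m ≃ Fin m) (load : ℕ → Fin n → ℚ)
    (hexec : IsPhragmenExec App r load)
    (t : ℕ) (N' : Finset (Fin n))
    (hunranked : ∃ h : Fin m, (∀ i ∈ N', h ∈ App i) ∧ t ≤ (r.symm h : ℕ)) :
    ∑ i ∈ N',
      (Finset.univ.sup' ⟨⟨0, hn⟩, Finset.mem_univ _⟩ (load t) - load t i) ≤ 1 :=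
  hexec.sum_sup'_sub_le_one _ N' t hunranked

theorem phragmen_excess_bound
    {n m : ℕ} (hn : 0 < n) (App : Fin n → Finset (Fin m))
    (hApp : ∀ i, (App i).Nonempty)
    (r : Fin m ≃ Fin m) (load : ℕ → Fin n → ℚ)
    (hexec : IsPhragmenExec App r load)
    (t : ℕ) (ht : t ≤ m) (N' : Finset (Fin n))
    (hunranked : ∃ h : Fin m, (∀ i ∈ N', h ∈ App i) ∧ t ≤ (r.symm h : ℕ)) :
    ∑ i ∈ N',
      (Finset.univ.sup' ⟨⟨0, hn⟩, Finset.mem_univ _⟩ (load t) - load t i) ≤ 1 :=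
  phragmen_excess_bound_general hn App r load hexec t N' hunranked
end

section
/- Run Phragmén's rule on an approval profile and let ℓ_i(t) denote the load of voter i after t steps. Let N' ⊆ N be a group of voters with |N'| = n' and suppose that after step k some alternative approved by all voters of N' is still unranked. Then Σ_{i∈N'} ℓ_i(k) ≥ n'·k/n − 1. -/
open Finset

/-!
Let `L = k/n`, the average load after `k` steps, and let step `u + 1 ≤ k` be the first one after
which some voter carries load at least `L`. Before that step every voter of `N'` still lies strictly
below `L`, and `N'` could jointly pay for the unranked alternative they all approve. Spreading its
unit of load over `N'` in proportion to the gaps `L - ℓ_j(u)` would keep every load below `L` if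
these gaps summed to more than `1`; optimality of the actual step therefore forces
`Σ_{j ∈ N'} (L - ℓ_j(u)) ≤ 1`, and loads only grow from step `u` to step `k`.
-/

theorem exists_lt_not_and_succ_of_not_zero {p : ℕ → Prop} (h0 : ¬p 0) {k : ℕ} (hk : p k) :
    ∃ u < k, ¬p u ∧ p (u + 1) := by
  induction k with
  | zero => exact absurd hk h0
  | succ k ih =>
    by_cases hpk : p k
    · obtain ⟨u, huk, hu⟩ := ih hpk
      exact ⟨u, huk.trans k.lt_succ_self, hu⟩
    · exact ⟨k, k.lt_succ_self, hpk, hk⟩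

namespace IsPhragmenExec

variable {n m : ℕ} {App : Fin n → Finset (Fin m)} {r : Fin m ≃ Fin m} {load : ℕ → Fin n → ℚ}

theorem load_mono (hexec : IsPhragmenExec App r load) {s s' : ℕ} (hss' : s ≤ s') (hs' : s' ≤ m)
    (i : Fin n) : load s i ≤ load s' i := by
  induction s', hss' using Nat.le_induction with
  | base => exact le_rfl
  | succ t _ ih => exact (ih (by omega)).trans (hexec.2.1 ⟨t, by omega⟩ i)

theorem load_nonneg (hexec : IsPhragmenExec App r load) {s : ℕ} (hs : s ≤ m) (i : Fin n) :
    0 ≤ load s i :=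
  hexec.1 i ▸ hexec.load_mono s.zero_le hs i

theorem sum_load (hexec : IsPhragmenExec App r load) {s : ℕ} (hs : s ≤ m) :
    ∑ i, load s i = s := by
  induction s with
  | zero => simp [hexec.1]
  | succ t ih =>
    have hstep := hexec.2.2.2.1 ⟨t, by omega⟩
    rw [sum_sub_distrib, ih (by omega)] at hstep
    push_cast
    linarith

theorem exists_div_le_load (hexec : IsPhragmenExec App r load) (hn : 0 < n) {s : ℕ}
    (hs : s ≤ m) : ∃ i, (s : ℚ) / n ≤ load s i := by
  have : Nonempty (Fin n) := ⟨⟨0, hn⟩⟩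
  obtain ⟨i, -, hi⟩ := exists_le_of_sum_le (f := fun _ => (s : ℚ) / n) univ_nonempty <| by
    rw [hexec.sum_load hs, sum_const, card_univ, Fintype.card_fin, nsmul_eq_mul]
    exact (mul_div_cancel₀ _ (by positivity)).le
  exact ⟨i, hi⟩

theorem sum_sub_load_le_one (hexec : IsPhragmenExec App r load) {u : ℕ} (hu : u < m)
    {b : Fin m} (hb : u ≤ r.symm b) {N' : Finset (Fin n)} (hN' : ∀ i ∈ N', b ∈ App i) {L : ℚ}
    (hbelow : ∀ j, load u j < L) (hreach : ∃ i, L ≤ load (u + 1) i) :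
    ∑ j ∈ N', (L - load u j) ≤ 1 := by
  classical
  set C := ∑ j ∈ N', (L - load u j)
  by_contra! hC
  have hCpos : 0 < C := one_pos.trans hC
  let δ : Fin n → ℚ := fun j => if j ∈ N' then (L - load u j) / C else 0
  have hδ_nonneg : ∀ j, 0 ≤ δ j := fun j => by
    unfold δ
    split_ifs
    exacts [div_nonneg (sub_pos.2 (hbelow j)).le hCpos.le, le_rfl]
  have hδ_approves : ∀ j, δ j ≠ 0 → b ∈ App j := fun j hj => by
    by_contra hbj
    exact hj (if_neg fun hjN => hbj (hN' j hjN))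
  have hδ_sum : ∑ j, δ j = 1 := by
    rw [sum_ite_mem, univ_inter, ← sum_div, div_self hCpos.ne']
  have hδ_below : ∀ j, load u j + δ j < L := fun j => by
    unfold δ
    split_ifs
    · linarith [div_lt_self (sub_pos.2 (hbelow j)) hC]
    · simpa using hbelow j
  obtain ⟨i, hi⟩ := hreach
  obtain ⟨j, hj⟩ := hexec.2.2.2.2 ⟨u, hu⟩ b hb δ hδ_nonneg hδ_approves hδ_sum i
  exact (hi.trans hj).not_gt (hδ_below j)

end IsPhragmenExec

theorem phragmen_load_sum_lower_bound_general
    {n m : ℕ} (App : Fin n → Finset (Fin m))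
    (r : Fin m ≃ Fin m) (load : ℕ → Fin n → ℚ)
    (hexec : IsPhragmenExec App r load)
    (k : ℕ) (N' : Finset (Fin n))
    (hunranked : ∃ h : Fin m, (∀ i ∈ N', h ∈ App i) ∧ k ≤ (r.symm h : ℕ)) :
    (N'.card : ℚ) * (k : ℚ) / (n : ℚ) - 1 ≤ ∑ i ∈ N', load k i := by
  obtain ⟨b, hbN', hkb⟩ := hunranked
  have hkm : k < m := hkb.trans_lt (r.symm b).isLt
  rw [mul_div_assoc]
  set L : ℚ := k / n
  have hsum_nonneg : 0 ≤ ∑ i ∈ N', load k i := sum_nonneg fun i _ => hexec.load_nonneg hkm.le i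
  rcases le_or_gt L 0 with hL | hL
  · nlinarith [(N'.card.cast_nonneg : (0 : ℚ) ≤ N'.card)]
  have hn : 0 < n := Nat.pos_of_ne_zero fun hn => by simp [L, hn] at hL
  obtain ⟨u, huk, hbelow, hcross⟩ := exists_lt_not_and_succ_of_not_zero
    (p := fun s => ∃ i, L ≤ load s i) (by simp [hexec.1, hL]) (hexec.exists_div_le_load hn hkm.le)
  push Not at hbelow
  have hgaps := hexec.sum_sub_load_le_one (huk.trans hkm) (by omega) hbN' hbelow hcross
  rw [sum_sub_distrib, sum_const, nsmul_eq_mul] at hgaps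
  have hgrow := sum_le_sum fun j (_ : j ∈ N') => hexec.load_mono huk.le hkm.le j
  linarith

theorem phragmen_load_sum_lower_bound
    {n m : ℕ} (App : Fin n → Finset (Fin m)) (hApp : ∀ i, (App i).Nonempty)
    (r : Fin m ≃ Fin m) (load : ℕ → Fin n → ℚ)
    (hexec : IsPhragmenExec App r load)
    (k : ℕ) (hk : k ≤ m) (N' : Finset (Fin n))
    (hunranked : ∃ h : Fin m, (∀ i ∈ N', h ∈ App i) ∧ k ≤ (r.symm h : ℕ)) :
    (N'.card : ℚ) * (k : ℚ) / (n : ℚ) - 1 ≤ ∑ i ∈ N', load k i :=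
  phragmen_load_sum_lower_bound_general App r load hexec k N' hunranked
end

section
/- Run SeqPAV on an approval profile; for each voter i let a_i(t) denote the number of alternatives in A_i ranked before step t, and let T(t) = Σ_{i∈N} 1/(a_i(t)+1). Let N' ⊆ N be a group with |N'| = n', let λ ≥ 1 be an integer, and suppose that before step t some alternative approved by all voters of N' is still unranked and Σ_{i∈N'} a_i(t) < λ·n'. Then T(t) − T(t+1) > (1/(2n))·(n'/(λ+1))². -/
open Finset

/-- `r` is a SeqPAV ranking: at every step, the alternative placed next has maximal
marginal PAV-score among all still-unranked alternatives. -/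
def IsSeqPAVRanking {n m : ℕ} (App : Fin n → Finset (Fin m)) (r : Fin m ≃ Fin m) : Prop :=
  ∀ t : Fin m, ∀ b : Fin m, (t : ℕ) ≤ (r.symm b : ℕ) →
    pavScore App (insert b (topk r (t : ℕ))) - pavScore App (topk r (t : ℕ)) ≤
    pavScore App (insert (r t) (topk r (t : ℕ))) - pavScore App (topk r (t : ℕ))

/-- `a_i(t)` of the proof of Theorem 4: the number of alternatives of `A_i` that are
ranked before the step placing the alternative at position `t` (0-indexed), i.e.
before step `t+1` (1-indexed). -/
def rankedApproved {n m : ℕ} (App : Fin n → Finset (Fin m)) (r : Fin m ≃ Fin m)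
    (t : ℕ) (i : Fin n) : ℕ :=
  (App i ∩ topk r t).card

/-- `T(t)` of the proof of Theorem 4: `∑_{i ∈ N} 1/(a_i(t)+1)`. -/
def potentialT {n m : ℕ} (App : Fin n → Finset (Fin m)) (r : Fin m ≃ Fin m)
    (t : ℕ) : ℚ :=
  ∑ i, (1 : ℚ) / (rankedApproved App r t i + 1)

/-!
Write `x_i = 1/(a_i(t)+1)`: adding an unranked alternative `b` raises the PAV-score by the sum
of `x_i` over the approvers of `b`, while the potential drops by `1/(a_i+1) - 1/(a_i+2) ≥ x_i²/2`
for every approver of the alternative `c` actually ranked at step `t`. Since SeqPAV picks `c`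
over the commonly approved unranked alternative, `∑_{c ∈ A_i} x_i ≥ ∑_{i ∈ N'} x_i`, and by
convexity of `k ↦ 1/k` the latter exceeds `n'/(λ+1)` as soon as `∑_{i ∈ N'} a_i < λ n'`.
Cauchy–Schwarz then gives `∑_{c ∈ A_i} x_i² ≥ (n'/(λ+1))²/n`.
-/

section Arithmetic

variable {K : Type*} [Field K] [LinearOrder K] [IsStrictOrderedRing K]

/-- The tangent line of `x ↦ 1/x` at `L` lies below its graph on `x > 0`. -/
lemma two_div_sub_div_sq_le_one_div {x L : K} (hx : 0 < x) (hL : 0 < L) :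
    2 / L - x / L ^ 2 ≤ 1 / x := by
  rw [div_sub_div _ _ hL.ne' (by positivity), div_le_div_iff₀ (by positivity) hx]
  nlinarith [sq_nonneg (x - L)]

lemma one_div_sq_div_two_le_one_div_sub_one_div_add_one {x : K} (hx : 1 ≤ x) :
    (1 / x) ^ 2 / 2 ≤ 1 / x - 1 / (x + 1) := by
  have hx₀ : 0 < x := by linarith
  rw [div_sub_div _ _ hx₀.ne' (by positivity), div_pow, one_pow, div_div,
    div_le_div_iff₀ (by positivity) (by positivity)]
  nlinarith

lemma card_div_lt_sum_one_div {ι : Type*} {s : Finset ι} {a : ι → ℕ} {lam : ℕ}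
    (h : ∑ i ∈ s, a i < lam * #s) :
    (#s : K) / (lam + 1) < ∑ i ∈ s, 1 / ((a i : K) + 1) := by
  set L : K := (lam : K) + 1
  have hL : 0 < L := by positivity
  have hsum : ∑ i ∈ s, ((a i : K) + 1) ≤ L * #s - 1 := by
    have : ((∑ i ∈ s, a i : ℕ) : K) + 1 ≤ lam * #s := by exact_mod_cast h
    rw [sum_add_distrib, sum_const, nsmul_one]
    push_cast at this
    linarith
  calc (#s : K) / L
      < #s * (2 / L) - (L * #s - 1) / L ^ 2 := by
        field_simp
        linarith
    _ ≤ #s * (2 / L) - (∑ i ∈ s, ((a i : K) + 1)) / L ^ 2 := by gcongr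
    _ = ∑ i ∈ s, (2 / L - ((a i : K) + 1) / L ^ 2) := by
        rw [sum_sub_distrib, sum_const, nsmul_eq_mul, sum_div]
    _ ≤ ∑ i ∈ s, 1 / ((a i : K) + 1) :=
        sum_le_sum fun i _ => two_div_sub_div_sq_le_one_div (by positivity) hL

end Arithmetic

lemma card_inter_insert_of_notMem {α : Type*} [DecidableEq α] {A S : Finset α} {b : α}
    (hb : b ∉ S) : #(A ∩ insert b S) = #(A ∩ S) + if b ∈ A then 1 else 0 := by
  split_ifs with hbA
  · rw [inter_insert_of_mem hbA, card_insert_of_notMem fun h => hb (mem_inter.1 h).2]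
  · rw [inter_insert_of_notMem hbA, add_zero]

section SeqPAV

variable {n m : ℕ} (App : Fin n → Finset (Fin m))

lemma notMem_topk {r : Fin m ≃ Fin m} {k : ℕ} {b : Fin m} (h : k ≤ r.symm b) :
    b ∉ topk r k := by
  simpa [topk] using h

lemma topk_succ (r : Fin m ≃ Fin m) (t : Fin m) :
    topk r (t + 1) = insert (r t) (topk r t) := by
  ext a
  simp only [topk, mem_filter, mem_univ, true_and, mem_insert, Nat.lt_succ_iff_lt_or_eq,
    Fin.val_inj, Equiv.symm_apply_eq]
  exact or_comm

lemma pavScore_insert_sub {S : Finset (Fin m)} {b : Fin m} (hb : b ∉ S) :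
    pavScore App (insert b S) - pavScore App S =
      ∑ i with b ∈ App i, 1 / ((#(App i ∩ S) : ℚ) + 1) := by
  rw [pavScore, pavScore, ← sum_sub_distrib, sum_filter]
  refine sum_congr rfl fun i _ => ?_
  rw [card_inter_insert_of_notMem hb]
  split_ifs <;> simp [sum_range_succ]

lemma IsSeqPAVRanking.sum_one_div_le {r : Fin m ≃ Fin m} (hr : IsSeqPAVRanking App r)
    (t : Fin m) {b : Fin m} (hb : t ≤ (r.symm b : ℕ)) :
    ∑ i with b ∈ App i, 1 / ((rankedApproved App r t i : ℚ) + 1) ≤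
      ∑ i with r t ∈ App i, 1 / ((rankedApproved App r t i : ℚ) + 1) := by
  have := hr t b hb
  rwa [pavScore_insert_sub App (notMem_topk hb),
    pavScore_insert_sub App (notMem_topk (by simp))] at this

lemma potentialT_sub_potentialT_succ (r : Fin m ≃ Fin m) (t : Fin m) :
    potentialT App r t - potentialT App r (t + 1) =
      ∑ i with r t ∈ App i, (1 / ((rankedApproved App r t i : ℚ) + 1) -
        1 / ((rankedApproved App r t i : ℚ) + 1 + 1)) := by
  rw [potentialT, potentialT, ← sum_sub_distrib, sum_filter]
  refine sum_congr rfl fun i _ => ?_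
  rw [rankedApproved, rankedApproved, topk_succ,
    card_inter_insert_of_notMem (notMem_topk (by simp))]
  split_ifs <;> push_cast <;> ring

lemma sum_sq_div_two_le_potentialT_sub (r : Fin m ≃ Fin m) (t : Fin m) :
    (∑ i with r t ∈ App i, (1 / ((rankedApproved App r t i : ℚ) + 1)) ^ 2) / 2 ≤
      potentialT App r t - potentialT App r (t + 1) := by
  rw [potentialT_sub_potentialT_succ, sum_div]
  exact sum_le_sum fun i _ =>
    one_div_sq_div_two_le_one_div_sub_one_div_add_one (by simp)

end SeqPAV

theorem seqpav_potential_drop_general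
    {n m : ℕ} (App : Fin n → Finset (Fin m))
    (r : Fin m ≃ Fin m) (hr : IsSeqPAVRanking App r)
    (N' : Finset (Fin n)) (lam : ℕ) (t : Fin m)
    (hunranked : ∃ h : Fin m, (∀ i ∈ N', h ∈ App i) ∧ (t : ℕ) ≤ (r.symm h : ℕ))
    (hsat : ∑ i ∈ N', rankedApproved App r (t : ℕ) i < lam * N'.card) :
    1 / (2 * (n : ℚ)) * ((N'.card : ℚ) / ((lam : ℚ) + 1)) ^ 2 <
      potentialT App r (t : ℕ) - potentialT App r ((t : ℕ) + 1) := by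
  obtain ⟨h, hN'h, hh⟩ := hunranked
  set x : Fin n → ℚ := fun i => 1 / ((rankedApproved App r t i : ℚ) + 1)
  set F := ({i | r t ∈ App i} : Finset (Fin n))
  have hn : (0 : ℚ) < n := by
    obtain ⟨i, -⟩ := nonempty_of_ne_empty (by rintro rfl; simp at hsat : N' ≠ ∅)
    exact_mod_cast i.pos
  have hF : (#N' : ℚ) / (lam + 1) < ∑ i ∈ F, x i :=
    calc (#N' : ℚ) / (lam + 1) < ∑ i ∈ N', x i := card_div_lt_sum_one_div hsat
      _ ≤ ∑ i with h ∈ App i, x i :=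
          sum_le_sum_of_subset_of_nonneg (fun i hi => by simpa using hN'h i hi)
            fun _ _ _ => by positivity
      _ ≤ ∑ i ∈ F, x i := hr.sum_one_div_le App t hh
  have hcs : (∑ i ∈ F, x i) ^ 2 ≤ n * ∑ i ∈ F, x i ^ 2 :=
    (sq_sum_le_card_mul_sum_sq).trans
      (mul_le_mul_of_nonneg_right (by exact_mod_cast (card_le_univ F).trans_eq (Fintype.card_fin n))
        (sum_nonneg fun _ _ => sq_nonneg _))
  calc 1 / (2 * (n : ℚ)) * ((#N' : ℚ) / (lam + 1)) ^ 2
      < 1 / (2 * n) * (∑ i ∈ F, x i) ^ 2 := by gcongr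
    _ ≤ (∑ i ∈ F, x i ^ 2) / 2 := by
        rw [div_mul_eq_mul_div, one_mul, div_le_div_iff₀ (by positivity) two_pos]
        nlinarith
    _ ≤ potentialT App r t - potentialT App r (t + 1) :=
        sum_sq_div_two_le_potentialT_sub App r t

theorem seqpav_potential_drop
    {n m : ℕ} (App : Fin n → Finset (Fin m)) (hApp : ∀ i, (App i).Nonempty)
    (r : Fin m ≃ Fin m) (hr : IsSeqPAVRanking App r)
    (N' : Finset (Fin n)) (lam : ℕ) (hlam : 1 ≤ lam) (t : Fin m)
    (hunranked : ∃ h : Fin m, (∀ i ∈ N', h ∈ App i) ∧ (t : ℕ) ≤ (r.symm h : ℕ))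
    (hsat : ∑ i ∈ N', rankedApproved App r (t : ℕ) i < lam * N'.card) :
    1 / (2 * (n : ℚ)) * ((N'.card : ℚ) / ((lam : ℚ) + 1)) ^ 2 <
      potentialT App r (t : ℕ) - potentialT App r ((t : ℕ) + 1) :=
  seqpav_potential_drop_general App r hr N' lam t hunranked hsat
end
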